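/- arXiv:2108.08660 — 9 statements merged into one kernel-verified Lean document; each statement's English description precedes it below -/
import Mathlib

section
/- Assume d_A ≠ 0 and set b₁ := B(−v), b₂ := N(B(−v)), b₃ := d_A⁻¹ • N²(B(−v)), b₄ := v. Then M(b₁) = b₁ + b₂, M(b₂) = b₂ + d_A • b₃, M(b₃) = b₃ + b₄, and M(b₄) = b₄; equivalently, the matrix of M in the generalized Doran–Morgan basis is [[1,0,0,0],[1,1,0,0],[0,d_A,1,0],[0,0,1,1]] (rows listed, the j-th column giving the coordinates of M(bⱼ)). -/
/-- The action of `M` on the generalized Doran–Morgan basis: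
`M b₁ = b₁ + b₂`, `M b₂ = b₂ + d_A • b₃`, `M b₃ = b₃ + b₄`, `M b₄ = b₄`,
i.e. the matrix of `M` in this basis is `[[1,0,0,0],[1,1,0,0],[0,d_A,1,0],[0,0,1,1]]`. -/
theorem doran_morgan_monodromy_matrix
    (V : Type*) [AddCommGroup V] [Module ℂ V] [FiniteDimensional ℂ V]
    (hdim : Module.finrank ℂ V = 4)
    (M A : V ≃ₗ[ℂ] V)
    (N B : V →ₗ[ℂ] V)
    (hN : N = (M : V →ₗ[ℂ] V) - LinearMap.id)
    (hB : B = (A : V →ₗ[ℂ] V) - LinearMap.id)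
    (hN4 : N ^ 4 = 0) (hN3 : N ^ 3 ≠ 0)
    (v : V) (hv : v ≠ 0) (hNv : N v = 0)
    (dA : ℂ) (hdA : (N ^ 3) (B (-v)) = dA • v) (hdA0 : dA ≠ 0) :
    M (B (-v)) = B (-v) + N (B (-v)) ∧
    M (N (B (-v))) = N (B (-v)) + dA • (dA⁻¹ • (N ^ 2) (B (-v))) ∧
    M (dA⁻¹ • (N ^ 2) (B (-v))) = dA⁻¹ • (N ^ 2) (B (-v)) + v ∧
    M v = v := by
  have hM : ∀ x : V, M x = x + N x := by
    intro x
    rw [hN]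
    simp
  have h2 : N (N (B (-v))) = (N ^ 2) (B (-v)) := by
    simp [pow_two]
  have h3 : N ((N ^ 2) (B (-v))) = (N ^ 3) (B (-v)) := by
    rw [← Module.End.mul_apply, ← pow_succ']
  refine ⟨hM _, ?_, ?_, ?_⟩
  · rw [hM, h2, smul_smul, mul_inv_cancel₀ hdA0, one_smul]
  · rw [hM, map_smul, h3, hdA, smul_smul, inv_mul_cancel₀ hdA0, one_smul]
  · rw [hM, hNv, add_zero]
end

section
/- Let G be a subgroup of the group of linear automorphisms of V containing the identity. If V is irreducible under G, i.e. the only ℂ-subspaces of V invariant under every element of G are 0 and V, then there exists A ∈ G such that N³((A − id)(−v)) ≠ 0 (that is, d_A ≠ 0 for some A ∈ G). -/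
/-- If `V` is irreducible under a subgroup `G` of its linear automorphism group,
then there exists `A ∈ G` with `d_A ≠ 0`, i.e. `N³((A - id)(-v)) ≠ 0`. -/
theorem exists_nonzero_dA_of_irreducible
    (V : Type*) [AddCommGroup V] [Module ℂ V] [FiniteDimensional ℂ V]
    (hdim : Module.finrank ℂ V = 4)
    (M : V ≃ₗ[ℂ] V) (N : V →ₗ[ℂ] V)
    (hN : N = (M : V →ₗ[ℂ] V) - LinearMap.id)
    (hN4 : N ^ 4 = 0) (hN3 : N ^ 3 ≠ 0)
    (v : V) (hv : v ≠ 0) (hNv : N v = 0)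
    (G : Subgroup (V ≃ₗ[ℂ] V))
    (hirr : ∀ W : Submodule ℂ V, (∀ g ∈ G, ∀ w ∈ W, g w ∈ W) → W = ⊥ ∨ W = ⊤) :
    ∃ A ∈ G, (N ^ 3) (((A : V →ₗ[ℂ] V) - (LinearMap.id : V →ₗ[ℂ] V)) (-v)) ≠ 0 := by
  by_contra h
  push_neg at h
  -- From the hypothesis, N³(g v - v) = 0 for all g ∈ G.
  have hN3v : (N ^ 3) v = 0 := by
    have : (N ^ 3) v = N (N (N v)) := by
      simp [pow_succ, Module.End.mul_apply]
    rw [this, hNv, map_zero, map_zero]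
  have key : ∀ g ∈ G, (N ^ 3) ((g : V ≃ₗ[ℂ] V) v) = 0 := by
    intro g hg
    have h0 := h g hg
    simp only [LinearMap.sub_apply, LinearMap.id_apply, map_neg, map_sub, LinearEquiv.coe_coe,
      hN3v, sub_zero, neg_neg, neg_eq_zero, sub_neg_eq_add, zero_add] at h0
    exact h0
  -- The span of the orbit of v is G-invariant.
  set S : Set V := {w | ∃ g ∈ G, (g : V ≃ₗ[ℂ] V) v = w} with hS
  set W : Submodule ℂ V := Submodule.span ℂ S with hW
  have hinv : ∀ g ∈ G, ∀ w ∈ W, (g : V ≃ₗ[ℂ] V) w ∈ W := by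
    intro g hg w hw
    induction hw using Submodule.span_induction with
    | mem x hx =>
      obtain ⟨g', hg', rfl⟩ := hx
      exact Submodule.subset_span ⟨g * g', G.mul_mem hg hg', rfl⟩
    | zero => simp
    | add x y _ _ hx hy => rw [map_add]; exact W.add_mem hx hy
    | smul c x _ hx => rw [map_smul]; exact W.smul_mem c hx
  have hvW : v ∈ W := Submodule.subset_span ⟨1, G.one_mem, by simp⟩
  have hWtop : W = ⊤ := by
    rcases hirr W hinv with hbot | htop
    · exact absurd (hbot ▸ hvW) (by simpa using hv)
    · exact htop
  -- But W ⊆ ker N³.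
  have hWker : W ≤ LinearMap.ker (N ^ 3) := by
    rw [hW, Submodule.span_le]
    rintro x ⟨g, hg, rfl⟩
    exact LinearMap.mem_ker.2 (key g hg)
  have : (N ^ 3) = 0 := by
    ext x
    have hx : x ∈ LinearMap.ker (N ^ 3) := hWker (hWtop ▸ Submodule.mem_top)
    simpa using hx
  exact hN3 this
end

section
/- Assume v ∈ V_ℚ, that M and A map V_ℚ into itself, and that d_A ≠ 0, and let (b₁, b₂, b₃, b₄) := (B(−v), N(B(−v)), d_A⁻¹ • N²(B(−v)), v) be the generalized Doran–Morgan basis of V. Then for every linear automorphism g of V with g(V_ℚ) ⊆ V_ℚ, the matrix of g with respect to the basis (b₁, b₂, b₃, b₄) has all entries rational: writing g(bⱼ) = Σᵢ cᵢⱼ • bᵢ, every coefficient cᵢⱼ lies in ℚ (i.e. equals the image of a rational number in ℂ). -/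
/-- In the generalized Doran–Morgan basis, every linear automorphism of `V`
preserving the rational subspace `V_ℚ` has a matrix with rational entries:
if `g bⱼ = Σᵢ cᵢⱼ • bᵢ` then each `cᵢⱼ` is rational. -/
theorem matrix_rational_in_doran_morgan_basis
    (V : Type*) [AddCommGroup V] [Module ℂ V] [FiniteDimensional ℂ V]
    (hdim : Module.finrank ℂ V = 4)
    (M A : V ≃ₗ[ℂ] V)
    (N B : V →ₗ[ℂ] V)
    (hN : N = (M : V →ₗ[ℂ] V) - LinearMap.id)
    (hB : B = (A : V →ₗ[ℂ] V) - LinearMap.id)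
    (hN4 : N ^ 4 = 0) (hN3 : N ^ 3 ≠ 0)
    (v : V) (hv : v ≠ 0) (hNv : N v = 0)
    (dA : ℂ) (hdA : (N ^ 3) (B (-v)) = dA • v) (hdA0 : dA ≠ 0)
    (w : Module.Basis (Fin 4) ℂ V)
    (VQ : Set V)
    (hVQ : VQ = {x : V | ∃ q : Fin 4 → ℚ, x = ∑ i, (q i : ℂ) • w i})
    (hvQ : v ∈ VQ)
    (hMQ : ∀ x ∈ VQ, M x ∈ VQ)
    (hAQ : ∀ x ∈ VQ, A x ∈ VQ)
    (b : Fin 4 → V)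
    (hb : b = ![B (-v), N (B (-v)), dA⁻¹ • (N ^ 2) (B (-v)), v])
    (g : V ≃ₗ[ℂ] V) (hgQ : ∀ x ∈ VQ, g x ∈ VQ) :
    ∀ c : Fin 4 → Fin 4 → ℂ,
      (∀ j, g (b j) = ∑ i, c i j • b i) →
      ∀ i j, ∃ q : ℚ, c i j = (q : ℂ) := by
  classical
  -- ℚ-module structure on V via restriction of scalars
  letI instQ : Module ℚ V := Module.compHom V (algebraMap ℚ ℂ)
  have hsmul : ∀ (q : ℚ) (x : V), q • x = (q : ℂ) • x := fun q x => by
    show algebraMap ℚ ℂ q • x = (q : ℂ) • x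
    rw [eq_ratCast]
  haveI : IsScalarTower ℚ ℂ V := ⟨fun q z x => by
    rw [Rat.smul_def, hsmul, mul_smul]⟩
  have hinj : Function.Injective fun r : ℚ => r • (1 : ℂ) := by
    intro a b h
    simpa [Rat.smul_def] using h
  set u : V := B (-v) with hu
  -- N computations
  have hN2v : (N ^ 2) v = 0 := by
    have e : (N ^ 2) v = (N ^ 1) (N v) := by rw [pow_succ]; rfl
    rw [e, hNv, map_zero]
  have hN3v : (N ^ 3) v = 0 := by
    have e : (N ^ 3) v = (N ^ 2) (N v) := by rw [pow_succ]; rfl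
    rw [e, hNv, map_zero]
  have hN3u : (N ^ 3) u = dA • v := hdA
  have hN4u : (N ^ 4) u = 0 := by rw [hN4]; rfl
  have hN3Nu : (N ^ 3) (N u) = 0 := by
    have e : (N ^ 4) u = (N ^ 3) (N u) := by rw [pow_succ]; rfl
    rw [← e, hN4u]
  have hN2Nu : (N ^ 2) (N u) = dA • v := by
    have e : (N ^ 3) u = (N ^ 2) (N u) := by rw [pow_succ]; rfl
    rw [← e, hN3u]
  have hN3N2u : (N ^ 3) ((N ^ 2) u) = 0 := by
    have h5 : N ^ 3 * N ^ 2 = N * N ^ 4 := by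
      rw [← pow_add, ← pow_succ']
    have e : (N ^ 3) ((N ^ 2) u) = N ((N ^ 4) u) := by
      show (N ^ 3 * N ^ 2) u = N ((N ^ 4) u)
      rw [h5]; rfl
    rw [e, hN4u, map_zero]
  have hN2N2u : (N ^ 2) ((N ^ 2) u) = 0 := by
    show (N ^ 2 * N ^ 2) u = 0
    rw [← pow_add]
    exact hN4u
  have hNN2u : N ((N ^ 2) u) = dA • v := by
    show (N * N ^ 2) u = dA • v
    rw [← pow_succ']
    exact hN3u
  -- the vector b 2
  have hb0 : b 0 = u := by rw [hb]; rfl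
  have hb1 : b 1 = N u := by rw [hb]; rfl
  have hb2 : b 2 = dA⁻¹ • (N ^ 2) u := by rw [hb]; rfl
  have hb3 : b 3 = v := by rw [hb]; rfl
  -- ℂ-linear independence of b
  have hli : LinearIndependent ℂ b := by
    rw [Fintype.linearIndependent_iff]
    intro a ha
    have ha' : a 0 • u + a 1 • N u + a 2 • (dA⁻¹ • (N ^ 2) u) + a 3 • v = 0 := by
      rw [Fin.sum_univ_four, hb0, hb1, hb2, hb3] at ha
      linear_combination (norm := module) ha
    have h0 : a 0 = 0 := by
      have h := congrArg (⇑(N ^ 3)) ha'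
      simp only [map_add, map_smul, hN3u, hN3Nu, hN3N2u, hN3v, map_zero, smul_zero,
        add_zero, smul_smul] at h
      rcases smul_eq_zero.mp h with h | h
      · exact (mul_eq_zero.mp h).resolve_right hdA0
      · exact absurd h hv
    rw [h0, zero_smul, zero_add] at ha'
    have h1 : a 1 = 0 := by
      have h := congrArg (⇑(N ^ 2)) ha'
      simp only [map_add, map_smul, hN2Nu, hN2N2u, hN2v, map_zero, smul_zero,
        add_zero, smul_smul, mul_zero, zero_add] at h
      rcases smul_eq_zero.mp h with h | h
      · exact (mul_eq_zero.mp h).resolve_right hdA0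
      · exact absurd h hv
    rw [h1, zero_smul, zero_add] at ha'
    have h2 : a 2 = 0 := by
      have h := congrArg (⇑N) ha'
      simp only [map_add, map_smul, hNN2u, hNv, map_zero, smul_zero, add_zero,
        smul_smul] at h
      rw [mul_assoc, inv_mul_cancel₀ hdA0, mul_one] at h
      rcases smul_eq_zero.mp h with h | h
      · exact h
      · exact absurd h hv
    rw [h2, zero_smul, zero_add] at ha'
    have h3 : a 3 = 0 := by
      rcases smul_eq_zero.mp ha' with h | h
      · exact h
      · exact absurd h hv
    intro i
    fin_cases i <;> assumption
  -- VQ is the ℚ-span of the w's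
  set Q : Submodule ℚ V := Submodule.span ℚ (Set.range ⇑w) with hQdef
  have hVQspan : VQ = ↑Q := by
    ext x
    rw [hVQ, Set.mem_setOf_eq, SetLike.mem_coe, hQdef, Submodule.mem_span_range_iff_exists_fun]
    constructor
    · rintro ⟨q, rfl⟩
      exact ⟨q, by simp only [hsmul]⟩
    · rintro ⟨q, h⟩
      exact ⟨q, by rw [← h]; simp only [hsmul]⟩
  rw [hVQspan] at hvQ hMQ hAQ hgQ
  have hNQ : ∀ x ∈ Q, N x ∈ Q := by
    intro x hx
    have : N x = M x - x := by rw [hN]; rfl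
    rw [this]
    exact Q.sub_mem (hMQ x hx) hx
  have huQ : u ∈ Q := by
    have hnv : -v ∈ Q := Q.neg_mem hvQ
    have : u = A (-v) - (-v) := by rw [hu, hB]; rfl
    rw [this]
    exact Q.sub_mem (hAQ _ hnv) hnv
  have hN2uQ : (N ^ 2) u ∈ Q := by
    have : (N ^ 2) u = N (N u) := by rw [pow_succ, Module.End.mul_apply, pow_one]
    rw [this]
    exact hNQ _ (hNQ _ huQ)
  have hdavQ : dA • v ∈ Q := by
    rw [← hN3u]
    have : (N ^ 3) u = N ((N ^ 2) u) := by
      rw [pow_succ', Module.End.mul_apply]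
    rw [this]
    exact hNQ _ hN2uQ
  -- scalar of a nonzero rational vector staying rational is rational
  have hscalar : ∀ (z : ℂ) (x : V), x ∈ Q → x ≠ 0 → z • x ∈ Q → ∃ r : ℚ, z = (r : ℂ) := by
    intro z x hx hx0 hzx
    rw [hQdef, Submodule.mem_span_range_iff_exists_fun] at hx hzx
    obtain ⟨q, hq⟩ := hx
    obtain ⟨p, hp⟩ := hzx
    simp only [hsmul] at hq hp
    have hzq : ∀ i, z * (q i : ℂ) = (p i : ℂ) := by
      have h0 : ∑ i, (z * (q i : ℂ) - (p i : ℂ)) • w i = 0 := by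
        have : ∑ i, (z * (q i : ℂ)) • w i = z • x := by
          rw [← hq, Finset.smul_sum]
          exact Finset.sum_congr rfl fun i _ => (smul_smul z _ _).symm
        simp only [sub_smul, Finset.sum_sub_distrib, this, hp, sub_self]
      intro i
      have := Fintype.linearIndependent_iff.mp w.linearIndependent _ h0 i
      exact sub_eq_zero.mp this
    obtain ⟨k, hk⟩ : ∃ k, q k ≠ 0 := by
      by_contra h
      push_neg at h
      apply hx0
      rw [← hq]
      simp [h]
    refine ⟨p k / q k, ?_⟩
    have hqk : (q k : ℂ) ≠ 0 := by exact_mod_cast hk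
    push_cast
    rw [eq_div_iff hqk]
    exact hzq k
  obtain ⟨r, hr⟩ := hscalar dA v hvQ hv hdavQ
  have hr0 : r ≠ 0 := by
    rintro rfl
    apply hdA0
    rw [hr]; norm_num
  have hmem2 : dA⁻¹ • (N ^ 2) u ∈ Q := by
    have e : dA⁻¹ • (N ^ 2) u = (r⁻¹ : ℚ) • ((N ^ 2) u) := by
      rw [hsmul, hr]
      push_cast
      rfl
    rw [e]
    exact Q.smul_mem _ hN2uQ
  have hbQ : ∀ i, b i ∈ Q := by
    intro i
    fin_cases i
    · exact hb0 ▸ huQ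
    · exact hb1 ▸ hNQ _ huQ
    · exact hb2 ▸ hmem2
    · exact hb3 ▸ hvQ
  -- ℚ-linear independence and ℚ-spanning
  have hliQ : LinearIndependent ℚ b := hli.restrict_scalars hinj
  set bQ : Fin 4 → Q := fun i => ⟨b i, hbQ i⟩ with hbQdef
  have hliQ' : LinearIndependent ℚ bQ := by
    have : b = (Q.subtype : Q →ₗ[ℚ] V) ∘ bQ := rfl
    rw [this] at hliQ
    exact LinearIndependent.of_comp _ hliQ
  have hwQ : LinearIndependent ℚ (⇑w) := w.linearIndependent.restrict_scalars hinj
  have hfinrank : Module.finrank ℚ Q = 4 := by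
    rw [Module.finrank_eq_card_basis (Module.Basis.span hwQ)]
    simp
  let bQB : Module.Basis (Fin 4) ℚ Q :=
    basisOfLinearIndependentOfCardEqFinrank hliQ' (by rw [hfinrank]; simp)
  have hbQB : ∀ i, bQB i = bQ i := fun i => by
    simp [bQB, coe_basisOfLinearIndependentOfCardEqFinrank]
  -- conclusion
  intro c hc i j
  have hgbQ : g (b j) ∈ Q := hgQ _ (hbQ j)
  obtain ⟨q, hq⟩ : ∃ q : Fin 4 → ℚ, g (b j) = ∑ i, (q i : ℂ) • b i := by
    refine ⟨fun i => bQB.repr ⟨g (b j), hgbQ⟩ i, ?_⟩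
    have := bQB.sum_repr ⟨g (b j), hgbQ⟩
    have h2 := congrArg (Q.subtype) this
    simp only [map_sum, map_smul] at h2
    calc g (b j) = Q.subtype ⟨g (b j), hgbQ⟩ := rfl
      _ = ∑ k, (bQB.repr ⟨g (b j), hgbQ⟩) k • Q.subtype (bQB k) := h2.symm
      _ = ∑ k, ((bQB.repr ⟨g (b j), hgbQ⟩) k : ℂ) • b k := by
          refine Finset.sum_congr rfl fun k _ => ?_
          rw [hbQB, ← hsmul]
          rfl
  have hzero : ∑ k, (c k j - (q k : ℂ)) • b k = 0 := by
    simp only [sub_smul, Finset.sum_sub_distrib, ← hc j, ← hq, sub_self]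
  have := Fintype.linearIndependent_iff.mp hli _ hzero i
  exact ⟨q i, sub_eq_zero.mp this⟩
end

section
/- Let K ∈ ℂ and let S = [[−1,b,c,d],[0,f,g,h],[0,j,k,l],[0,n,o,p]] be a complex 4×4 matrix satisfying S² = C(K), det S = 1, and f·k − g·j ≠ 0. Then S has one of the following four forms: (i) there exist c, d, o ∈ ℂ and g ∈ ℂ with g ≠ 0 such that S = [[−1, ((o+K·g+2)·c − d·o − 1)/g, c, d],[0, K·g+1, g, g],[0, −K·(o+K·g+2), −K·g−o−1, −K·g−o−2],[0, o·K, o, o+1]]; or (ii) there exist b, d ∈ ℂ and l ∈ ℂ with l ≠ 0 such that S = [[−1, b, ((l+2)·d − 1)/l, d],[0,1,0,0],[0, l·K, l+1, l],[0, −K·(l+2), −l−2, −l−1]]; or (iii) there exist b, c ∈ ℂ such that S = [[−1, b, c, 1/2],[0,1,0,0],[0,0,1,0],[0,−2K,−2,−1]]; or (iv) S = [[−1, K/2, 1/2, 1/2],[0,−1,0,0],[0,0,−1,0],[0,0,0,−1]]. -/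
set_option maxHeartbeats 1000000 in
/-- Classification of the matrices `S` with first column `(-1,0,0,0)ᵀ`, `S² = C(K)`,
`det S = 1` and `f·k − g·j ≠ 0`: `S` has one of four explicit forms. -/
theorem half_conifold_monodromy_classification
    (K b c d f g h j k l n o p : ℂ)
    (S : Matrix (Fin 4) (Fin 4) ℂ)
    (hS : S = !![-1, b, c, d;
                  0, f, g, h;
                  0, j, k, l;
                  0, n, o, p])
    (hsq : S ^ 2 = !![1, -K, -1, -1;
                      0, 1, 0, 0;
                      0, 0, 1, 0;
                      0, 0, 0, 1])
    (hdet : S.det = 1)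
    (hfk : f * k - g * j ≠ 0) :
    (∃ c' d' o' g' : ℂ, g' ≠ 0 ∧
      S = !![-1, ((o' + K * g' + 2) * c' - d' * o' - 1) / g', c', d';
              0, K * g' + 1, g', g';
              0, -K * (o' + K * g' + 2), -K * g' - o' - 1, -K * g' - o' - 2;
              0, o' * K, o', o' + 1]) ∨
    (∃ b' d' l' : ℂ, l' ≠ 0 ∧
      S = !![-1, b', ((l' + 2) * d' - 1) / l', d';
              0, 1, 0, 0;
              0, l' * K, l' + 1, l';
              0, -K * (l' + 2), -l' - 2, -l' - 1]) ∨
    (∃ b' c' : ℂ,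
      S = !![-1, b', c', 1/2;
              0, 1, 0, 0;
              0, 0, 1, 0;
              0, -2 * K, -2, -1]) ∨
    S = !![-1, K / 2, 1/2, 1/2;
            0, -1, 0, 0;
            0, 0, -1, 0;
            0, 0, 0, -1] := by
  subst hS
  rw [sq] at hsq
  have eA := congrFun (congrFun hsq 0) 1
  have eB := congrFun (congrFun hsq 0) 2
  have eC := congrFun (congrFun hsq 0) 3
  have e1 := congrFun (congrFun hsq 1) 1
  have e2 := congrFun (congrFun hsq 1) 2
  have e3 := congrFun (congrFun hsq 1) 3
  have e4 := congrFun (congrFun hsq 2) 1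
  have e5 := congrFun (congrFun hsq 2) 2
  have e6 := congrFun (congrFun hsq 2) 3
  have e7 := congrFun (congrFun hsq 3) 1
  have e8 := congrFun (congrFun hsq 3) 2
  have e9 := congrFun (congrFun hsq 3) 3
  simp [Matrix.mul_apply, Fin.sum_univ_four, Matrix.vecHead, Matrix.vecTail] at eA eB eC e1 e2 e3 e4 e5 e6 e7 e8 e9
  simp [Matrix.det_succ_row_zero, Fin.sum_univ_succ] at hdet
  clear hsq hfk
  -- Cayley–Hamilton style consequences
  have c11 : (1 + (f*k - g*j + (f*p - h*n) + (k*p - l*o))) * f = f + k + p - 1 := by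
    linear_combination ((f+k+p) - f) * e1 - g * e4 - h * e7 - hdet
  have c12 : (1 + (f*k - g*j + (f*p - h*n) + (k*p - l*o))) * g = 0 := by
    linear_combination ((f+k+p) - f) * e2 - g * e5 - h * e8
  have c13 : (1 + (f*k - g*j + (f*p - h*n) + (k*p - l*o))) * h = 0 := by
    linear_combination ((f+k+p) - f) * e3 - g * e6 - h * e9
  have c21 : (1 + (f*k - g*j + (f*p - h*n) + (k*p - l*o))) * j = 0 := by
    linear_combination (-j) * e1 + ((f+k+p) - k) * e4 - l * e7
  have c22 : (1 + (f*k - g*j + (f*p - h*n) + (k*p - l*o))) * k = f + k + p - 1 := by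
    linear_combination (-j) * e2 + ((f+k+p) - k) * e5 - l * e8 - hdet
  have c23 : (1 + (f*k - g*j + (f*p - h*n) + (k*p - l*o))) * l = 0 := by
    linear_combination (-j) * e3 + ((f+k+p) - k) * e6 - l * e9
  have c31 : (1 + (f*k - g*j + (f*p - h*n) + (k*p - l*o))) * n = 0 := by
    linear_combination (-n) * e1 - o * e4 + ((f+k+p) - p) * e7
  have c32 : (1 + (f*k - g*j + (f*p - h*n) + (k*p - l*o))) * o = 0 := by
    linear_combination (-n) * e2 - o * e5 + ((f+k+p) - p) * e8
  have c33 : (1 + (f*k - g*j + (f*p - h*n) + (k*p - l*o))) * p = f + k + p - 1 := by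
    linear_combination (-n) * e3 - o * e6 + ((f+k+p) - p) * e9 - hdet
  rcases eq_or_ne (1 + (f*k - g*j + (f*p - h*n) + (k*p - l*o))) 0 with hs0 | hs0
  · -- trace-one case : rank one
    have ht : f + k + p = 1 := by linear_combination -c11 + f * hs0
    have hs1 : f*k - g*j + (f*p - h*n) + (k*p - l*o) = -1 := by linear_combination hs0
    have hM1 : (-g)*(-l) - (-h)*(1-k) = 0 := by linear_combination e3 - h*ht
    have hM2 : (-g)*(1-p) - (-h)*(-o) = 0 := by linear_combination -e2 + g*ht
    have hM3 : (1-k)*(1-p) - (-l)*(-o) = 0 := by linear_combination e1 + (-1-f)*ht + hs1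
    have hM4 : (1-f)*(1-k) - (-g)*(-j) = 0 := by linear_combination e9 + (-1-p)*ht + hs1
    have hM5 : (1-f)*(-o) - (-g)*(-n) = 0 := by linear_combination -e8 + o*ht
    have hM6 : (-j)*(-o) - (1-k)*(-n) = 0 := by linear_combination e7 - n*ht
    have hh : h = g := by linear_combination -g*eC + h*eB + c*hM1 + d*hM2
    have hl : l = k - 1 := by linear_combination (1-k)*eC + l*eB - b*hM1 + d*hM3
    have hp : p = o + 1 := by linear_combination -o*eC - (1-p)*eB - b*hM2 - c*hM3
    have hf2 : f = K*g + 1 := by linear_combination -(1-f)*eB - g*eA - c*hM4 - d*hM5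
    have hj : j = K*(k-1) := by linear_combination (1-k)*eA + j*eB + b*hM4 - d*hM6
    have hn : n = K*o := by linear_combination -o*eA + n*eB + b*hM5 + c*hM6
    have hk : k = -K*g - o - 1 := by linear_combination ht - hf2 - hp
    rcases eq_or_ne g 0 with hg0 | hg0
    · subst hg0
      have ho2 : o = -l - 2 := by linear_combination hl + hk
      rcases eq_or_ne l 0 with hl0 | hl0
      · -- case (iii)
        subst hl0
        refine Or.inr (Or.inr (Or.inl ⟨b, c, ?_⟩))
        have hdX : d = 1/2 := by
          linear_combination (-1/2 : ℂ)*eB + (d/2)*ho2 - (c/2)*hl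
        have hfX : f = 1 := by linear_combination hf2
        have hjX : j = 0 := by linear_combination hj - K*hl
        have hkX : k = 1 := by linear_combination -hl
        have hnX : n = -2*K := by linear_combination hn + K*ho2
        have hoX : o = -2 := by linear_combination ho2
        have hpX : p = -1 := by linear_combination hp + ho2
        rw [hdX, hfX, hh, hjX, hkX, hnX, hoX, hpX]
      · -- case (ii)
        refine Or.inr (Or.inl ⟨b, d, l, hl0, ?_⟩)
        have hcX : c = ((l + 2) * d - 1) / l := by
          rw [eq_div_iff hl0]
          linear_combination eB + c*hl - d*ho2
        have hfX : f = 1 := by linear_combination hf2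
        have hjX : j = l * K := by linear_combination hj - K*hl
        have hkX : k = l + 1 := by linear_combination -hl
        have hnX : n = -K * (l + 2) := by linear_combination hn + K*ho2
        have hoX : o = -l - 2 := ho2
        have hpX : p = -l - 1 := by linear_combination hp + ho2
        rw [hcX, hfX, hh, hjX, hkX, hnX, hoX, hpX]
    · -- case (i)
      refine Or.inl ⟨c, d, o, g, hg0, ?_⟩
      have hbX : b = ((o + K * g + 2) * c - d * o - 1) / g := by
        rw [eq_div_iff hg0]
        linear_combination eB - c*hk
      have hfX : f = K * g + 1 := by linear_combination hf2
      have hjX : j = -K * (o + K * g + 2) := by linear_combination hj + K*hk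
      have hkX : k = -K * g - o - 1 := by linear_combination hk
      have hlX : l = -K * g - o - 2 := by linear_combination hl + hk
      have hnX : n = o * K := by linear_combination hn
      have hpX : p = o + 1 := hp
      rw [hbX, hfX, hh, hjX, hkX, hlX, hnX, hpX]
  · -- scalar case : S lower block is -1
    have hg0 : g = 0 := (mul_eq_zero.mp c12).resolve_left hs0
    have hh0 : h = 0 := (mul_eq_zero.mp c13).resolve_left hs0
    have hj0 : j = 0 := (mul_eq_zero.mp c21).resolve_left hs0
    have hl0 : l = 0 := (mul_eq_zero.mp c23).resolve_left hs0
    have hn0 : n = 0 := (mul_eq_zero.mp c31).resolve_left hs0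
    have ho0 : o = 0 := (mul_eq_zero.mp c32).resolve_left hs0
    have hfk' : f = k := mul_left_cancel₀ hs0 (c11.trans c22.symm)
    have hfp : f = p := mul_left_cancel₀ hs0 (c11.trans c33.symm)
    have hf1 : f * f = 1 := by linear_combination e1 - j*hg0 - n*hh0
    have hd3 : f * (f * f) = -1 := by
      linear_combination -hdet + f*f*hfk' + f*k*hfp + f*o*hl0 + (j*p - l*n)*hg0 - (j*o - k*n)*hh0
    have hfm : f = -1 := by linear_combination hd3 - f*hf1
    have hkm : k = -1 := by linear_combination hfm - hfk'
    have hpm : p = -1 := by linear_combination hfm - hfp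
    have hbX : b = K / 2 := by
      linear_combination (-1/2 : ℂ)*eA + (b/2)*hfm + (c/2)*hj0 + (d/2)*hn0
    have hcX : c = 1/2 := by
      linear_combination (-1/2 : ℂ)*eB + (c/2)*hkm + (b/2)*hg0 + (d/2)*ho0
    have hdX : d = 1/2 := by
      linear_combination (-1/2 : ℂ)*eC + (d/2)*hpm + (b/2)*hh0 + (c/2)*hl0
    refine Or.inr (Or.inr (Or.inr ?_))
    rw [hbX, hcX, hdX, hfm, hkm, hpm, hg0, hh0, hj0, hl0, hn0, ho0]
end

section
/- Let K, c, d, o ∈ ℂ and g ∈ ℂ with g ≠ 0, and let S := [[−1, ((o+K·g+2)·c − d·o − 1)/g, c, d],[0, K·g+1, g, g],[0, −K·(o+K·g+2), −K·g−o−1, −K·g−o−2],[0, o·K, o, o+1]]. Then every complex 4×4 matrix T satisfying T·J = S·T is of the form T = [[−((−c·o + d·o − 2c + 1)/(2g))·t₂₁ − ((c−d)/2)·t₄₁, −(1/g)·t₂₃, t₁₃, −((−c·o + d·o − 2c + 1)/(2g))·t₂₄ − ((c−d)/2)·t₄₄],[t₂₁, 0, t₂₃, t₂₄],[−K·t₂₁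 − t₄₁, 0, −((o + K·g + 2)/g)·t₂₃, −K·t₂₄ − t₄₄],[t₄₁, 0, (o/g)·t₂₃, t₄₄]] for some complex numbers t₁₃, t₂₁, t₂₃, t₂₄, t₄₁, t₄₄. -/
set_option maxHeartbeats 2000000 in
/-- Every transition matrix `T` from the Frobenius basis at a half-conifold point
(with local monodromy `J`) to the Doran–Morgan basis (with local monodromy `S`
of the first classified form) has the stated shape with six free parameters. -/
theorem half_conifold_transition_form
    (K c d o g : ℂ) (hg : g ≠ 0)
    (S : Matrix (Fin 4) (Fin 4) ℂ)
    (hS : S = !![-1, ((o + K * g + 2) * c - d * o - 1) / g, c, d;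
                  0, K * g + 1, g, g;
                  0, -K * (o + K * g + 2), -K * g - o - 1, -K * g - o - 2;
                  0, o * K, o, o + 1])
    (T : Matrix (Fin 4) (Fin 4) ℂ)
    (hT : T * !![1, 0, 0, 0;
                 0, -1, 1, 0;
                 0, 0, -1, 0;
                 0, 0, 0, 1] = S * T) :
    ∃ t₁₃ t₂₁ t₂₃ t₂₄ t₄₁ t₄₄ : ℂ,
      T = !![-((-c * o + d * o - 2 * c + 1) / (2 * g)) * t₂₁ - ((c - d) / 2) * t₄₁,
             -(1 / g) * t₂₃, t₁₃,
             -((-c * o + d * o - 2 * c + 1) / (2 * g)) * t₂₄ - ((c - d) / 2) * t₄₄;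
             t₂₁, 0, t₂₃, t₂₄;
             -K * t₂₁ - t₄₁, 0, -((o + K * g + 2) / g) * t₂₃, -K * t₂₄ - t₄₄;
             t₄₁, 0, (o / g) * t₂₃, t₄₄] := by
  subst hS
  have e : ∀ i j, (T * !![(1:ℂ), 0, 0, 0; 0, -1, 1, 0; 0, 0, -1, 0; 0, 0, 0, 1]) i j
      = (!![-1, ((o + K * g + 2) * c - d * o - 1) / g, c, d;
                  0, K * g + 1, g, g;
                  0, -K * (o + K * g + 2), -K * g - o - 1, -K * g - o - 2;
                  0, o * K, o, o + 1] * T) i j := fun i j => by rw [hT]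
  have e00 := e 0 0; have e01 := e 0 1; have e02 := e 0 2; have e03 := e 0 3
  have e10 := e 1 0; have e11 := e 1 1; have e12 := e 1 2; have e13 := e 1 3
  have e20 := e 2 0; have e21 := e 2 1; have e22 := e 2 2; have e23 := e 2 3
  have e30 := e 3 0; have e31 := e 3 1; have e32 := e 3 2; have e33 := e 3 3
  simp [Matrix.mul_apply, Fin.sum_univ_four, Matrix.vecHead, Matrix.vecTail] at e00 e01 e02 e03 e10 e11 e12 e13 e20 e21 e22 e23 e30 e31 e32 e33
  clear e hT e20 e30 e33 e01
  field_simp at e00 e02 e03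
  -- column 0
  have h20 : T 2 0 = -K * T 1 0 - T 3 0 :=
    mul_left_cancel₀ hg (by linear_combination -e10)
  have h00s : 2 * g * T 0 0 = -(-c * o + d * o - 2 * c + 1) * T 1 0 - g * (c - d) * T 3 0 := by
    linear_combination e00 - c * e10
  -- column 3
  have h23 : T 2 3 = -K * T 1 3 - T 3 3 :=
    mul_left_cancel₀ hg (by linear_combination -e13)
  have h03s : 2 * g * T 0 3 = -(-c * o + d * o - 2 * c + 1) * T 1 3 - g * (c - d) * T 3 3 := by
    linear_combination e03 - c * e13
  -- columns 1 and 2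
  have h11 : T 1 1 = 0 := by
    linear_combination (1 - (K*g+2)/2) * e12 - (1/2) * e11 - (g/2) * e22 - (g/2) * e32
  have h31 : T 3 1 = 0 := by
    linear_combination (-o/2) * e32 - (1/2) * e31 - (o*K/2) * e12 - (o/2) * e22
  have h21 : T 2 1 = 0 := by
    linear_combination (-(1:ℂ)/2) * e21 + ((K*(K*g+2)+o*K)/2) * e12 + (1 + (K*g+o)/2) * e22
      + ((K*g+o+2)/2) * e32
  have h32s : g * T 3 2 = o * T 1 2 := by
    linear_combination (o/4) * e11 + (o/2) * e12 - (g/4) * e31 - (g/2) * e32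
  have h22s : g * T 2 2 = -(o + K * g + 2) * T 1 2 := by
    linear_combination (-(o+2)/4) * e11 - ((o+K*g+2)/2) * e12 - (g/2) * e22 + (g/4) * e31
  have h01s : g * T 0 1 = -T 1 2 := by
    linear_combination e02
      + ((c*(o+2)-d*o)/2) * (-(1/2) * e11 - ((K*g+2)/2) * e12 - (g/2) * e22 - (g/2) * e32)
      + (g*(d-c)/2) * (-(1/2) * e31 - (o*K/2) * e12 - (o/2) * e22 - ((o+2)/2) * e32)
  have h00 : T 0 0 = -((-c * o + d * o - 2 * c + 1) / (2 * g)) * T 1 0 - ((c - d) / 2) * T 3 0 := by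
    field_simp; linear_combination h00s
  have h03 : T 0 3 = -((-c * o + d * o - 2 * c + 1) / (2 * g)) * T 1 3 - ((c - d) / 2) * T 3 3 := by
    field_simp; linear_combination h03s
  have h01 : T 0 1 = -(1 / g) * T 1 2 := by
    field_simp; linear_combination h01s
  have h22 : T 2 2 = -((o + K * g + 2) / g) * T 1 2 := by
    field_simp; linear_combination h22s
  have h32 : T 3 2 = (o / g) * T 1 2 := by
    field_simp; linear_combination h32s
  refine ⟨T 0 2, T 1 0, T 1 2, T 1 3, T 3 0, T 3 3, ?_⟩
  ext i j
  fin_cases i <;> fin_cases j <;>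
    simp only [Matrix.cons_val', Matrix.cons_val_zero, Matrix.cons_val_one, Matrix.head_cons,
      Matrix.empty_val', Matrix.cons_val_fin_one, Matrix.head_fin_const, Matrix.cons_val_two,
      Matrix.cons_val_three, Matrix.tail_cons, Fin.mk_zero, Fin.mk_one]
  · exact h00
  · exact h01
  · rfl
  · exact h03
  · rfl
  · exact h11
  · rfl
  · rfl
  · exact h20
  · exact h21
  · exact h22
  · exact h23
  · rfl
  · exact h31
  · exact h32
  · rfl
end

section
/- Let K, c, d, o, t₁₃, t₂₁, t₂₃, t₂₄, t₄₁, t₄₄ ∈ ℂ with g ∈ ℂ, g ≠ 0, and let T := [[−((−c·o + d·o − 2c + 1)/(2g))·t₂₁ − ((c−d)/2)·t₄₁, −(1/g)·t₂₃, t₁₃, −((−c·o + d·o − 2c + 1)/(2g))·t₂₄ − ((c−d)/2)·t₄₄],[t₂₁, 0, t₂₃, t₂₄],[−K·t₂₁ − t₄₁, 0, −((o + K·g + 2)/g)·t₂₃, −K·t₂₄ − t₄₄],[t₄₁, 0, (o/g)·t₂₃, t₄₄]]. Assume T is invertible. Then for every complex 4×4 matrix Q = (qᵢⱼ), the (1,2)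 entry of T⁻¹·Q·T equals (t₂₃/(2g·(t₂₄·t₄₁ − t₂₁·t₄₄))) · ((−K·o·q₂₁ − (o+2)·q₄₁ − o·q₃₁)·t₂₄ + (g·(K·q₂₁ + q₃₁ + q₄₁) + 2·q₂₁)·t₄₄). -/
set_option maxHeartbeats 1600000 in
/-- The `(1,2)` entry of `T⁻¹·Q·T` for the transition matrix `T` of the first form:
it is a fixed multiple of a rational linear combination of `t₂₄` and `t₄₄`. -/
theorem conifold_period_value_formula_case1
    (K c d o g t₁₃ t₂₁ t₂₃ t₂₄ t₄₁ t₄₄ : ℂ) (hg : g ≠ 0)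
    (T : Matrix (Fin 4) (Fin 4) ℂ)
    (hT : T = !![-((-c * o + d * o - 2 * c + 1) / (2 * g)) * t₂₁ - ((c - d) / 2) * t₄₁,
                 -(1 / g) * t₂₃, t₁₃,
                 -((-c * o + d * o - 2 * c + 1) / (2 * g)) * t₂₄ - ((c - d) / 2) * t₄₄;
                 t₂₁, 0, t₂₃, t₂₄;
                 -K * t₂₁ - t₄₁, 0, -((o + K * g + 2) / g) * t₂₃, -K * t₂₄ - t₄₄;
                 t₄₁, 0, (o / g) * t₂₃, t₄₄])
    (hinv : IsUnit T.det) :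
    ∀ Q : Matrix (Fin 4) (Fin 4) ℂ,
      (T⁻¹ * Q * T) 0 1 =
        (t₂₃ / (2 * g * (t₂₄ * t₄₁ - t₂₁ * t₄₄))) *
          ((-K * o * Q 1 0 - (o + 2) * Q 3 0 - o * Q 2 0) * t₂₄ +
           (g * (K * Q 1 0 + Q 2 0 + Q 3 0) + 2 * Q 1 0) * t₄₄) := by
  intro Q
  have hdet : T.det = 2 * t₂₃ ^ 2 * (t₂₄ * t₄₁ - t₂₁ * t₄₄) / g ^ 2 := by
    subst hT
    simp [Matrix.det_succ_row_zero, Fin.sum_univ_succ, Fin.succAbove]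
    field_simp
    ring
  have hdet0 : T.det ≠ 0 := hinv.ne_zero
  rw [hdet] at hdet0
  have ht23 : t₂₃ ≠ 0 := by
    intro h; apply hdet0; rw [h]; ring
  have hw : t₂₄ * t₄₁ - t₂₁ * t₄₄ ≠ 0 := by
    intro h; apply hdet0; rw [h]; ring
  -- entries of T
  have T00 : T 0 0 = -((-c * o + d * o - 2 * c + 1) / (2 * g)) * t₂₁ - ((c - d) / 2) * t₄₁ := by
    rw [hT]; rfl
  have T01 : T 0 1 = -(1 / g) * t₂₃ := by rw [hT]; rfl
  have T02 : T 0 2 = t₁₃ := by rw [hT]; rfl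
  have T03 : T 0 3 = -((-c * o + d * o - 2 * c + 1) / (2 * g)) * t₂₄ - ((c - d) / 2) * t₄₄ := by
    rw [hT]; rfl
  have T10 : T 1 0 = t₂₁ := by rw [hT]; rfl
  have T11 : T 1 1 = 0 := by rw [hT]; rfl
  have T12 : T 1 2 = t₂₃ := by rw [hT]; rfl
  have T13 : T 1 3 = t₂₄ := by rw [hT]; rfl
  have T20 : T 2 0 = -K * t₂₁ - t₄₁ := by rw [hT]; rfl
  have T21 : T 2 1 = 0 := by rw [hT]; rfl
  have T22 : T 2 2 = -((o + K * g + 2) / g) * t₂₃ := by rw [hT]; rfl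
  have T23 : T 2 3 = -K * t₂₄ - t₄₄ := by rw [hT]; rfl
  have T30 : T 3 0 = t₄₁ := by rw [hT]; rfl
  have T31 : T 3 1 = 0 := by rw [hT]; rfl
  have T32 : T 3 2 = (o / g) * t₂₃ := by rw [hT]; rfl
  have T33 : T 3 3 = t₄₄ := by rw [hT]; rfl
  have hTT : T⁻¹ * T = 1 := Matrix.nonsing_inv_mul T hinv
  have E : ∀ k, T⁻¹ 0 0 * T 0 k + T⁻¹ 0 1 * T 1 k + T⁻¹ 0 2 * T 2 k + T⁻¹ 0 3 * T 3 k
      = (1 : Matrix (Fin 4) (Fin 4) ℂ) 0 k := by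
    intro k
    rw [← hTT]
    rw [Matrix.mul_apply, Fin.sum_univ_four]
  have E0 := E 0; have E1 := E 1; have E2 := E 2; have E3 := E 3
  rw [T00, T10, T20, T30, Matrix.one_apply_eq] at E0
  rw [T01, T11, T21, T31, Matrix.one_apply_ne (by decide)] at E1
  rw [T02, T12, T22, T32, Matrix.one_apply_ne (by decide)] at E2
  rw [T03, T13, T23, T33, Matrix.one_apply_ne (by decide)] at E3
  set x0 := T⁻¹ 0 0 with hx0def
  set x1 := T⁻¹ 0 1 with hx1def
  set x2 := T⁻¹ 0 2 with hx2def
  set x3 := T⁻¹ 0 3 with hx3def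
  have hx0 : x0 = 0 := by
    have h : x0 * ((1 / g) * t₂₃) = 0 := by linear_combination -E1
    rcases mul_eq_zero.mp h with h' | h'
    · exact h'
    · exfalso
      rcases mul_eq_zero.mp h' with h'' | h''
      · rw [div_eq_zero_iff] at h''
        rcases h'' with h3 | h3
        · exact one_ne_zero h3
        · exact hg h3
      · exact ht23 h''
  rw [hx0] at E0 E2 E3
  have ha : (t₂₄ * t₄₁ - t₂₁ * t₄₄) * (x1 - K * x2) = -t₄₄ := by
    linear_combination (-t₄₄) * E0 + t₄₁ * E3
  have hb : (t₂₄ * t₄₁ - t₂₁ * t₄₄) * (x3 - x2) = t₂₄ := by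
    linear_combination t₂₄ * E0 - t₂₁ * E3
  have hc : 2 * x2 = g * (x1 - K * x2) + o * (x3 - x2) := by
    have h2 : t₂₃ * (2 * x2 - g * (x1 - K * x2) - o * (x3 - x2)) = 0 := by
      have hE2' : g * (0 * t₁₃ + x1 * t₂₃ + x2 * (-((o + K * g + 2) / g) * t₂₃)
          + x3 * ((o / g) * t₂₃)) = g * 0 := by rw [E2]
      field_simp at hE2'
      linear_combination -hE2'
    rcases mul_eq_zero.mp h2 with h' | h'
    · exact absurd h' ht23
    · linear_combination h'
  have h2w : 2 * (t₂₄ * t₄₁ - t₂₁ * t₄₄) ≠ 0 := by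
    intro h; apply hw; linear_combination h / 2
  have hx2 : x2 = (o * t₂₄ - g * t₄₄) / (2 * (t₂₄ * t₄₁ - t₂₁ * t₄₄)) := by
    rw [eq_div_iff h2w]
    linear_combination g * ha + o * hb + (t₂₄ * t₄₁ - t₂₁ * t₄₄) * hc
  have hx1 : x1 = (K * o * t₂₄ - K * g * t₄₄ - 2 * t₄₄) / (2 * (t₂₄ * t₄₁ - t₂₁ * t₄₄)) := by
    rw [eq_div_iff h2w]
    linear_combination (2 + K * g) * ha + K * o * hb + K * (t₂₄ * t₄₁ - t₂₁ * t₄₄) * hc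
  have hx3 : x3 = (o * t₂₄ - g * t₄₄ + 2 * t₂₄) / (2 * (t₂₄ * t₄₁ - t₂₁ * t₄₄)) := by
    rw [eq_div_iff h2w]
    linear_combination g * ha + (2 + o) * hb + (t₂₄ * t₄₁ - t₂₁ * t₄₄) * hc
  have hG : (T⁻¹ * Q * T) 0 1 =
      (x0 * Q 0 0 + x1 * Q 1 0 + x2 * Q 2 0 + x3 * Q 3 0) * T 0 1
      + (x0 * Q 0 1 + x1 * Q 1 1 + x2 * Q 2 1 + x3 * Q 3 1) * T 1 1
      + (x0 * Q 0 2 + x1 * Q 1 2 + x2 * Q 2 2 + x3 * Q 3 2) * T 2 1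
      + (x0 * Q 0 3 + x1 * Q 1 3 + x2 * Q 2 3 + x3 * Q 3 3) * T 3 1 := by
    simp only [Matrix.mul_apply, Fin.sum_univ_four, hx0def, hx1def, hx2def, hx3def]
  rw [hG, T01, T11, T21, T31, hx0, hx1, hx2, hx3]
  field_simp
  ring
end

section
/- Let K, b, c, t₁₂, t₁₃, t₂₁, t₂₄, t₃₁, t₃₄ ∈ ℂ, and let T := [[(−K/4 + b/2)·t₂₁ + (c/2 − 1/4)·t₃₁, t₁₂, t₁₃, (−K/4 + b/2)·t₂₄ + (c/2 − 1/4)·t₃₄],[t₂₁, 0, 0, t₂₄],[t₃₁, 0, 0, t₃₄],[−K·t₂₁ − t₃₁, 0, 2·t₁₂, −K·t₂₄ − t₃₄]]. Assume T is invertible. Then for every complex 4×4 matrix Q = (qᵢⱼ), the (1,2) entry of T⁻¹·Q·T equals (t₁₂/(t₂₁·t₃₄ − t₂₄·t₃₁)) · (q₂₁·t₃₄ − q₃₁·t₂₄). -/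
/-- The `(1,2)` entry of `T⁻¹·Q·T` for the transition matrix `T` of the third form. -/
theorem conifold_period_value_formula_case3
    (K b c t₁₂ t₁₃ t₂₁ t₂₄ t₃₁ t₃₄ : ℂ)
    (T : Matrix (Fin 4) (Fin 4) ℂ)
    (hT : T = !![(-K / 4 + b / 2) * t₂₁ + (c / 2 - 1/4) * t₃₁, t₁₂, t₁₃,
                 (-K / 4 + b / 2) * t₂₄ + (c / 2 - 1/4) * t₃₄;
                 t₂₁, 0, 0, t₂₄;
                 t₃₁, 0, 0, t₃₄;
                 -K * t₂₁ - t₃₁, 0, 2 * t₁₂, -K * t₂₄ - t₃₄])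
    (hinv : IsUnit T.det) :
    ∀ Q : Matrix (Fin 4) (Fin 4) ℂ,
      (T⁻¹ * Q * T) 0 1 =
        (t₁₂ / (t₂₁ * t₃₄ - t₂₄ * t₃₁)) * (Q 1 0 * t₃₄ - Q 2 0 * t₂₄) := by
  intro Q
  have e1 : (1 : Fin 4).succAbove 2 = 3 := rfl
  have e2 : (2 : Fin 3).succ = 3 := rfl
  have hdet : T.det = 2 * t₁₂^2 * (t₂₁ * t₃₄ - t₂₄ * t₃₁) := by
    subst hT
    simp [Matrix.det_succ_row_zero, Fin.sum_univ_succ, e1, e2]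
    ring
  have ha0 : T.adjugate 0 0 = 0 := by
    subst hT; rw [Matrix.adjugate_apply]
    simp [Matrix.det_succ_row_zero, Fin.sum_univ_succ, Matrix.updateRow_apply,
      Pi.single_apply, e1, e2]
  have ha1 : T.adjugate 0 1 = 2 * t₁₂^2 * t₃₄ := by
    subst hT; rw [Matrix.adjugate_apply]
    simp [Matrix.det_succ_row_zero, Fin.sum_univ_succ, Matrix.updateRow_apply,
      Pi.single_apply, e1, e2]
    ring
  have ha2 : T.adjugate 0 2 = -(2 * t₁₂^2 * t₂₄) := by
    subst hT; rw [Matrix.adjugate_apply]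
    simp [Matrix.det_succ_row_zero, Fin.sum_univ_succ, Matrix.updateRow_apply,
      Pi.single_apply, e1, e2]
    ring
  have ha3 : T.adjugate 0 3 = 0 := by
    subst hT; rw [Matrix.adjugate_apply]
    simp [Matrix.det_succ_row_zero, Fin.sum_univ_succ, Matrix.updateRow_apply,
      Pi.single_apply, e1, e2]
  have hne : T.det ≠ 0 := hinv.ne_zero
  have h12 : t₁₂ ≠ 0 := by
    intro h; apply hne; rw [hdet, h]; ring
  have hD : t₂₁ * t₃₄ - t₂₄ * t₃₁ ≠ 0 := by
    intro h; apply hne; rw [hdet, h]; ring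
  have hTinv : T⁻¹ = (T.det)⁻¹ • T.adjugate := by
    rw [Matrix.inv_def, Ring.inverse_eq_inv']
  have hcol : ∀ j : Fin 4, T j 1 = if j = 0 then t₁₂ else 0 := by
    intro j; subst hT; fin_cases j <;> simp [Matrix.vecHead, Matrix.vecTail]
  rw [hTinv]
  simp only [Matrix.smul_mul, Matrix.smul_apply, smul_eq_mul]
  have : (T.adjugate * Q * T) 0 1 =
      2 * t₁₂^2 * t₃₄ * (Q 1 0 * t₁₂) + -(2 * t₁₂^2 * t₂₄) * (Q 2 0 * t₁₂) := by
    simp [Matrix.mul_apply, Fin.sum_univ_four, ha0, ha1, ha2, ha3]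
    have c0 := hcol 0; have c1 := hcol 1; have c2 := hcol 2; have c3 := hcol 3
    simp at c0 c1 c2 c3
    rw [c0, c1, c2, c3]
    ring
  rw [this, hdet]
  field_simp
  ring
end

section
/- Let K ∈ ℚ and let S be a 4×4 matrix with rational entries such that S·e₁ = −e₁ (its first column is (−1,0,0,0)ᵀ) and S² = C(K). Let T be an invertible complex 4×4 matrix such that T·J = S·T (where S is viewed as a complex matrix). Then the ℚ-vector subspace of ℂ spanned by the set { (T⁻¹·Q·T)₁,₂ : Q a 4×4 matrix with rational entries, viewed as a complex matrix } has dimension at most 2 over ℚ. -/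
open Matrix Submodule

private lemma rank_span_pair_le_two (y z : ℂ) :
    Module.rank ℚ (Submodule.span ℚ ({y, z} : Set ℂ)) ≤ 2 := by
  refine (rank_span_le _).trans ?_
  exact Cardinal.mk_insert_le.trans (by rw [Cardinal.mk_singleton, one_add_one_eq_two])

private lemma rank_span_triple_le_two (a₁ a₂ a₃ : ℚ) (x₁ x₂ x₃ : ℂ)
    (ha : a₁ ≠ 0 ∨ a₂ ≠ 0 ∨ a₃ ≠ 0)
    (hrel : (a₁ : ℂ) * x₁ + (a₂ : ℂ) * x₂ + (a₃ : ℂ) * x₃ = 0) :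
    Module.rank ℚ (Submodule.span ℚ ({x₁, x₂, x₃} : Set ℂ)) ≤ 2 := by
  rcases ha with ha | ha | ha
  · have hx : x₁ = (-(a₂/a₁)) • x₂ + (-(a₃/a₁)) • x₃ := by
      simp only [Rat.smul_def]
      push_cast
      have ha' : (a₁ : ℂ) ≠ 0 := by exact_mod_cast ha
      field_simp
      linear_combination hrel
    have hle : Submodule.span ℚ ({x₁, x₂, x₃} : Set ℂ) ≤
        Submodule.span ℚ ({x₂, x₃} : Set ℂ) := by
      rw [Submodule.span_le]
      rintro w (rfl | rfl | rfl)
      · rw [hx]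
        exact add_mem (smul_mem _ _ (subset_span (by simp)))
          (smul_mem _ _ (subset_span (by simp)))
      · exact subset_span (by simp)
      · exact subset_span (by simp)
    exact (Submodule.rank_mono hle).trans (rank_span_pair_le_two _ _)
  · have hx : x₂ = (-(a₁/a₂)) • x₁ + (-(a₃/a₂)) • x₃ := by
      simp only [Rat.smul_def]
      push_cast
      have ha' : (a₂ : ℂ) ≠ 0 := by exact_mod_cast ha
      field_simp
      linear_combination hrel
    have hle : Submodule.span ℚ ({x₁, x₂, x₃} : Set ℂ) ≤
        Submodule.span ℚ ({x₁, x₃} : Set ℂ) := by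
      rw [Submodule.span_le]
      rintro w (rfl | rfl | rfl)
      · exact subset_span (by simp)
      · rw [hx]
        exact add_mem (smul_mem _ _ (subset_span (by simp)))
          (smul_mem _ _ (subset_span (by simp)))
      · exact subset_span (by simp)
    exact (Submodule.rank_mono hle).trans (rank_span_pair_le_two _ _)
  · have hx : x₃ = (-(a₁/a₃)) • x₁ + (-(a₂/a₃)) • x₂ := by
      simp only [Rat.smul_def]
      push_cast
      have ha' : (a₃ : ℂ) ≠ 0 := by exact_mod_cast ha
      field_simp
      linear_combination hrel
    have hle : Submodule.span ℚ ({x₁, x₂, x₃} : Set ℂ) ≤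
        Submodule.span ℚ ({x₁, x₂} : Set ℂ) := by
      rw [Submodule.span_le]
      rintro w (rfl | rfl | rfl)
      · exact subset_span (by simp)
      · exact subset_span (by simp)
      · rw [hx]
        exact add_mem (smul_mem _ _ (subset_span (by simp)))
          (smul_mem _ _ (subset_span (by simp)))
    exact (Submodule.rank_mono hle).trans (rank_span_pair_le_two _ _)

/-- For a half-conifold singularity the `ℚ`-span of the values of the conifold period
under the full monodromy group has dimension at most `2`: in matrix terms, if `S` is
rational with first column `−e₁` and `S² = C(K)`, and `T` is invertible with
`T·J = S·T`, then the `ℚ`-span of the `(1,2)` entries of `T⁻¹·Q·T` over all rational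
`Q` has rank at most `2`. -/
theorem half_conifold_lattice_rank_le_two
    (K : ℚ) (S : Matrix (Fin 4) (Fin 4) ℚ)
    (he : S *ᵥ ![1, 0, 0, 0] = -![1, 0, 0, 0])
    (hsq : S ^ 2 = !![1, -K, -1, -1;
                      0, 1, 0, 0;
                      0, 0, 1, 0;
                      0, 0, 0, 1])
    (T : Matrix (Fin 4) (Fin 4) ℂ) (hT : IsUnit T.det)
    (hTJ : T * !![1, 0, 0, 0;
                  0, -1, 1, 0;
                  0, 0, -1, 0;
                  0, 0, 0, 1] = S.map (fun q => (q : ℂ)) * T) :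
    Module.rank ℚ (Submodule.span ℚ
      {z : ℂ | ∃ Q : Matrix (Fin 4) (Fin 4) ℚ,
        z = (T⁻¹ * Q.map (fun q => (q : ℂ)) * T) 0 1}) ≤ 2 := by
  set J : Matrix (Fin 4) (Fin 4) ℂ := !![1, 0, 0, 0;
                  0, -1, 1, 0;
                  0, 0, -1, 0;
                  0, 0, 0, 1] with hJdef
  set Sc : Matrix (Fin 4) (Fin 4) ℂ := S.map (fun q => (q : ℂ)) with hScdef
  -- first column of S
  have hS00 : S 0 0 = -1 := by
    have := congrFun he 0
    simpa [mulVec, dotProduct, Fin.sum_univ_four] using this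
  have hS10 : S 1 0 = 0 := by
    have := congrFun he 1
    simpa [mulVec, dotProduct, Fin.sum_univ_four] using this
  have hS20 : S 2 0 = 0 := by
    have := congrFun he 2
    simpa [mulVec, dotProduct, Fin.sum_univ_four] using this
  have hS30 : S 3 0 = 0 := by
    have := congrFun he 3
    simpa [mulVec, dotProduct, Fin.sum_univ_four] using this
  have hTT : T * T⁻¹ = 1 := Matrix.mul_nonsing_inv T hT
  have hTT' : T⁻¹ * T = 1 := Matrix.nonsing_inv_mul T hT
  -- the second column of T is a multiple of e₁
  have hcol : T 1 1 = 0 ∧ T 2 1 = 0 ∧ T 3 1 = 0 := by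
    set x : Fin 4 → ℂ := T⁻¹ *ᵥ ![1, 0, 0, 0] with hxdef
    have hTx : T *ᵥ x = ![1, 0, 0, 0] := by
      rw [hxdef, mulVec_mulVec, hTT, one_mulVec]
    have hScE : Sc *ᵥ ![1, 0, 0, 0] = -![1, 0, 0, 0] := by
      funext i
      fin_cases i <;>
        simp [hScdef, mulVec, dotProduct, Fin.sum_univ_four, Matrix.map_apply,
          hS00, hS10, hS20, hS30]
    have hinj : ∀ a b : Fin 4 → ℂ, T *ᵥ a = T *ᵥ b → a = b := by
      intro a b h
      have := congrArg (fun v => T⁻¹ *ᵥ v) h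
      simpa [mulVec_mulVec, hTT', one_mulVec] using this
    have hJx : T *ᵥ (J *ᵥ x) = T *ᵥ (-x) := by
      rw [mulVec_mulVec, hTJ, ← mulVec_mulVec, hTx, hScE, mulVec_neg, hTx]
    have hJx' : J *ᵥ x = -x := hinj _ _ hJx
    have hx0 : x 0 = 0 := by
      have := congrFun hJx' 0
      simp [hJdef, mulVec, dotProduct, Fin.sum_univ_four] at this
      linear_combination this / 2
    have hx2 : x 2 = 0 := by
      have := congrFun hJx' 1
      simp [hJdef, mulVec, dotProduct, Fin.sum_univ_four] at this
      linear_combination this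
    have hx3 : x 3 = 0 := by
      have := congrFun hJx' 3
      simp [hJdef, mulVec, dotProduct, Fin.sum_univ_four] at this
      linear_combination this / 2
    have hx1 : x 1 ≠ 0 := by
      intro h
      have := congrFun hTx 0
      simp [mulVec, dotProduct, Fin.sum_univ_four, hx0, hx2, hx3, h] at this
    refine ⟨?_, ?_, ?_⟩
    · have := congrFun hTx 1
      simp [mulVec, dotProduct, Fin.sum_univ_four, hx0, hx2, hx3] at this
      rcases this with h | h
      · exact h
      · exact absurd h hx1
    · have := congrFun hTx 2
      simp [mulVec, dotProduct, Fin.sum_univ_four, hx0, hx2, hx3] at this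
      rcases this with h | h
      · exact h
      · exact absurd h hx1
    · have := congrFun hTx 3
      simp [mulVec, dotProduct, Fin.sum_univ_four, hx0, hx2, hx3] at this
      rcases this with h | h
      · exact h
      · exact absurd h hx1
  obtain ⟨hT11, hT21, hT31⟩ := hcol
  -- the first row of T⁻¹ is a left 1-eigenvector of Sc
  have hJT : T⁻¹ * Sc = J * T⁻¹ := by
    calc T⁻¹ * Sc = T⁻¹ * Sc * (T * T⁻¹) := by rw [hTT, mul_one]
      _ = T⁻¹ * (Sc * T) * T⁻¹ := by noncomm_ring
      _ = T⁻¹ * (T * J) * T⁻¹ := by rw [← hTJ]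
      _ = (T⁻¹ * T) * J * T⁻¹ := by noncomm_ring
      _ = J * T⁻¹ := by rw [hTT', one_mul]
  have hu : ∀ j : Fin 4,
      T⁻¹ 0 0 * (S 0 j : ℂ) + T⁻¹ 0 1 * (S 1 j : ℂ) + T⁻¹ 0 2 * (S 2 j : ℂ)
        + T⁻¹ 0 3 * (S 3 j : ℂ) = T⁻¹ 0 j := by
    intro j
    have := congrFun (congrFun hJT 0) j
    simpa [hJdef, hScdef, mul_apply, Fin.sum_univ_four, Matrix.map_apply] using this
  have hu0 : T⁻¹ 0 0 = 0 := by
    have := hu 0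
    simp only [hS00, hS10, hS20, hS30] at this
    push_cast at this
    linear_combination -this / 2
  -- find a nontrivial rational relation
  have hB : ∃ j : Fin 4,
      S 1 j ≠ (if j = 1 then 1 else 0) ∨ S 2 j ≠ (if j = 2 then 1 else 0)
        ∨ S 3 j ≠ (if j = 3 then 1 else 0) := by
    by_contra hc
    push_neg at hc
    have e1 := (hc 2).1
    have e2 := (hc 2).2.1
    have e3 := (hc 2).2.2
    simp only [show ((2:Fin 4) = 1) = False by simp, show ((2:Fin 4) = 2) = True by simp,
      show ((2:Fin 4) = 3) = False by simp, if_true, if_false] at e1 e2 e3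
    have h02 := congrFun (congrFun hsq 0) 2
    rw [pow_two] at h02
    simp [mul_apply, Fin.sum_univ_four, hS00, e1, e2, e3] at h02
  obtain ⟨j, hor⟩ := hB
  set x₁ : ℂ := T⁻¹ 0 1 * T 0 1 with hx1def
  set x₂ : ℂ := T⁻¹ 0 2 * T 0 1 with hx2def
  set x₃ : ℂ := T⁻¹ 0 3 * T 0 1 with hx3def
  obtain ⟨a₁, a₂, a₃, ha, hrel⟩ : ∃ a₁ a₂ a₃ : ℚ, (a₁ ≠ 0 ∨ a₂ ≠ 0 ∨ a₃ ≠ 0) ∧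
      (a₁ : ℂ) * x₁ + (a₂ : ℂ) * x₂ + (a₃ : ℂ) * x₃ = 0 := by
    fin_cases j
    · exfalso
      simp [hS10, hS20, hS30] at hor
    · refine ⟨S 1 1 - 1, S 2 1, S 3 1, ?_, ?_⟩
      · simpa [sub_ne_zero] using hor
      · have h := hu 1
        rw [hx1def, hx2def, hx3def]
        push_cast
        linear_combination T 0 1 * h - T 0 1 * (S 0 1 : ℂ) * hu0
    · refine ⟨S 1 2, S 2 2 - 1, S 3 2, ?_, ?_⟩
      · simpa [sub_ne_zero] using hor
      · have h := hu 2
        rw [hx1def, hx2def, hx3def]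
        push_cast
        linear_combination T 0 1 * h - T 0 1 * (S 0 2 : ℂ) * hu0
    · refine ⟨S 1 3, S 2 3, S 3 3 - 1, ?_, ?_⟩
      · simpa [sub_ne_zero] using hor
      · have h := hu 3
        rw [hx1def, hx2def, hx3def]
        push_cast
        linear_combination T 0 1 * h - T 0 1 * (S 0 3 : ℂ) * hu0
  have hsub : {z : ℂ | ∃ Q : Matrix (Fin 4) (Fin 4) ℚ,
      z = (T⁻¹ * Q.map (fun q => (q : ℂ)) * T) 0 1}
      ⊆ (Submodule.span ℚ ({x₁, x₂, x₃} : Set ℂ) : Set ℂ) := by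
    rintro z ⟨Q, rfl⟩
    have hz : (T⁻¹ * Q.map (fun q => (q : ℂ)) * T) 0 1
        = (Q 1 0) • x₁ + (Q 2 0) • x₂ + (Q 3 0) • x₃ := by
      rw [hx1def, hx2def, hx3def]
      simp only [mul_apply, Fin.sum_univ_four, Matrix.map_apply, hT11, hT21, hT31,
        hu0, Rat.smul_def]
      ring
    rw [hz]
    refine add_mem (add_mem ?_ ?_) ?_ <;>
      exact smul_mem _ _ (subset_span (by simp))
  calc Module.rank ℚ (Submodule.span ℚ
        {z : ℂ | ∃ Q : Matrix (Fin 4) (Fin 4) ℚ,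
          z = (T⁻¹ * Q.map (fun q => (q : ℂ)) * T) 0 1})
      ≤ Module.rank ℚ (Submodule.span ℚ ({x₁, x₂, x₃} : Set ℂ)) :=
        Submodule.rank_mono (Submodule.span_le.mpr hsub)
    _ ≤ 2 := rank_span_triple_le_two a₁ a₂ a₃ x₁ x₂ x₃ ha hrel
end

section
/- Let K ∈ ℚ and let S be a 4×4 matrix with rational entries such that S·e₁ = −e₁ (its first column is (−1,0,0,0)ᵀ) and S² = C(K). Let T be an invertible complex 4×4 matrix such that T·J = S·T (where S is viewed as a complex matrix). Let d ∈ ℚ with d ≠ 0 and set M₀ := [[1,0,0,0],[1,1,0,0],[0,d,1,0],[0,0,1,1]] (viewed as a complex matrix; it is invertible). Then the ℚ-vector subspace of ℂ spanned by { (T⁻¹·M₀ⁿ·T)₁,₂ : n ∈ ℤ } equals the ℚ-vector subspace of ℂ spanned by { (T⁻¹·Q·T)₁,₂ : Q a 4×4 matrix with rational entries, viewed as a complex matrix }. -/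
open Matrix

/-- For a half-conifold singularity, the `ℚ`-span of the values of the conifold period
under integer powers of the MUM local monodromy `M₀` coincides with the `ℚ`-span of its
values under the full monodromy group (all rational matrices `Q`). -/
theorem half_conifold_lattice_spans_eq
    (K : ℚ) (S : Matrix (Fin 4) (Fin 4) ℚ)
    (he : S *ᵥ ![1, 0, 0, 0] = -![1, 0, 0, 0])
    (hsq : S ^ 2 = !![1, -K, -1, -1;
                      0, 1, 0, 0;
                      0, 0, 1, 0;
                      0, 0, 0, 1])
    (T : Matrix (Fin 4) (Fin 4) ℂ) (hT : IsUnit T.det)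
    (hTJ : T * !![1, 0, 0, 0;
                  0, -1, 1, 0;
                  0, 0, -1, 0;
                  0, 0, 0, 1] = S.map (fun q => (q : ℂ)) * T)
    (d : ℚ) (hd : d ≠ 0)
    (M₀ : Matrix (Fin 4) (Fin 4) ℂ)
    (hM₀ : M₀ = !![1, 0, 0, 0;
                   1, 1, 0, 0;
                   0, (d : ℂ), 1, 0;
                   0, 0, 1, 1]) :
    Submodule.span ℚ {z : ℂ | ∃ n : ℤ, z = (T⁻¹ * M₀ ^ n * T) 0 1} =
    Submodule.span ℚ {z : ℂ | ∃ Q : Matrix (Fin 4) (Fin 4) ℚ,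
      z = (T⁻¹ * Q.map (fun q => (q : ℂ)) * T) 0 1} := by
  have hTi : T⁻¹ * T = 1 := nonsing_inv_mul T hT
  have hTi' : T * T⁻¹ = 1 := mul_nonsing_inv T hT
  -- entries of first column of S
  have hS0 : S 0 0 = -1 := by
    have := congrFun he 0
    simp [mulVec, dotProduct, Fin.sum_univ_four] at this
    linarith
  have hS1 : S 1 0 = 0 := by
    have := congrFun he 1
    simpa [mulVec, dotProduct, Fin.sum_univ_four] using this
  have hS2 : S 2 0 = 0 := by
    have := congrFun he 2
    simpa [mulVec, dotProduct, Fin.sum_univ_four] using this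
  have hS3 : S 3 0 = 0 := by
    have := congrFun he 3
    simpa [mulVec, dotProduct, Fin.sum_univ_four] using this
  set Jc : Matrix (Fin 4) (Fin 4) ℂ :=
    !![1, 0, 0, 0; 0, -1, 1, 0; 0, 0, -1, 0; 0, 0, 0, 1] with hJc
  have hJT : Jc * T⁻¹ = T⁻¹ * S.map (fun q => (q : ℂ)) := by
    calc Jc * T⁻¹ = T⁻¹ * T * Jc * T⁻¹ := by rw [hTi, one_mul]
      _ = T⁻¹ * (T * Jc) * T⁻¹ := by rw [Matrix.mul_assoc T⁻¹ T Jc]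
      _ = T⁻¹ * (S.map (fun q => (q : ℂ)) * T) * T⁻¹ := by rw [hTJ]
      _ = T⁻¹ * S.map (fun q => (q : ℂ)) * (T * T⁻¹) := by
          rw [← Matrix.mul_assoc T⁻¹ (S.map (fun q => (q : ℂ))) T,
            Matrix.mul_assoc (T⁻¹ * S.map (fun q => (q : ℂ))) T T⁻¹]
      _ = T⁻¹ * S.map (fun q => (q : ℂ)) := by rw [hTi', Matrix.mul_one]
  -- entries of first column of T⁻¹
  have hcol : ∀ i, (Jc * T⁻¹) i 0 = (T⁻¹ * S.map (fun q => (q : ℂ))) i 0 :=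
    fun i => congrFun (congrFun hJT i) 0
  have hrhs : ∀ i, (T⁻¹ * S.map (fun q => (q : ℂ))) i 0 = -(T⁻¹ i 0) := by
    intro i
    simp [mul_apply, Fin.sum_univ_four, hS0, hS1, hS2, hS3]
  have hu00 : T⁻¹ 0 0 = 0 := by
    have h := (hcol 0).trans (hrhs 0)
    simp [hJc, mul_apply, Fin.sum_univ_four] at h
    linear_combination h / 2
  have hu20 : T⁻¹ 2 0 = 0 := by
    have h := (hcol 1).trans (hrhs 1)
    simp [hJc, mul_apply, Fin.sum_univ_four] at h
    linear_combination h
  have hu30 : T⁻¹ 3 0 = 0 := by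
    have h := (hcol 3).trans (hrhs 3)
    simp [hJc, mul_apply, Fin.sum_univ_four] at h
    linear_combination h / 2
  set m : ℂ := T⁻¹ 1 0 with hm
  have hcol2 : ∀ i, (T * T⁻¹) i 0 = (1 : Matrix (Fin 4) (Fin 4) ℂ) i 0 :=
    fun i => congrFun (congrFun hTi' i) 0
  have hbm : T 0 1 * m = 1 := by
    have h := hcol2 0
    simpa [mul_apply, Fin.sum_univ_four, hu00, hu20, hu30, Matrix.one_apply] using h
  have hmne : m ≠ 0 := by
    intro h; rw [h, mul_zero] at hbm; exact zero_ne_one hbm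
  have hT11 : T 1 1 = 0 := by
    have h := hcol2 1
    simp [mul_apply, Fin.sum_univ_four, hu00, hu20, hu30, Matrix.one_apply] at h
    exact h.resolve_right (hm ▸ hmne)
  have hT21 : T 2 1 = 0 := by
    have h := hcol2 2
    simp [mul_apply, Fin.sum_univ_four, hu00, hu20, hu30, Matrix.one_apply] at h
    exact h.resolve_right (hm ▸ hmne)
  have hT31 : T 3 1 = 0 := by
    have h := hcol2 3
    simp [mul_apply, Fin.sum_univ_four, hu00, hu20, hu30, Matrix.one_apply] at h
    exact h.resolve_right (hm ▸ hmne)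
  -- the key formula
  set B : ℂ := T 0 1 with hB
  set u1 : ℂ := T⁻¹ 0 1 with hu1
  set u2 : ℂ := T⁻¹ 0 2 with hu2
  set u3 : ℂ := T⁻¹ 0 3 with hu3
  have key : ∀ A : Matrix (Fin 4) (Fin 4) ℂ,
      (T⁻¹ * A * T) 0 1 = B * (u1 * A 1 0 + u2 * A 2 0 + u3 * A 3 0) := by
    intro A
    simp [mul_apply, Fin.sum_univ_four, hT11, hT21, hT31, hu00]
    ring
  -- rational matrix model of M₀
  set Mq : Matrix (Fin 4) (Fin 4) ℚ := !![1,0,0,0; 1,1,0,0; 0,d,1,0; 0,0,1,1] with hMq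
  have hdet : Mq.det = 1 := by
    simp [hMq, Matrix.det_succ_row_zero, Fin.sum_univ_succ]
  have hUq : IsUnit Mq := (Matrix.isUnit_iff_isUnit_det Mq).mpr (by rw [hdet]; exact isUnit_one)
  set φ : Matrix (Fin 4) (Fin 4) ℚ →+* Matrix (Fin 4) (Fin 4) ℂ :=
    (Rat.castHom ℂ).mapMatrix with hφ
  have hMφ : M₀ = φ Mq := by
    subst hM₀
    ext i j
    fin_cases i <;> fin_cases j <;>
      simp [hφ, hMq, RingHom.mapMatrix_apply, Matrix.map_apply, Matrix.vecHead, Matrix.vecTail, Function.comp] <;> norm_num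
  have hpow : ∀ n : ℤ, ∃ Q : Matrix (Fin 4) (Fin 4) ℚ,
      M₀ ^ n = Q.map (fun q => (q : ℂ)) := by
    intro n
    refine ⟨((hUq.unit ^ n : (Matrix (Fin 4) (Fin 4) ℚ)ˣ) : Matrix (Fin 4) (Fin 4) ℚ), ?_⟩
    have h1 : ((Units.map φ.toMonoidHom hUq.unit : (Matrix (Fin 4) (Fin 4) ℂ)ˣ) : Matrix (Fin 4) (Fin 4) ℂ) = M₀ := by
      rw [Units.coe_map]
      simp only [RingHom.toMonoidHom_eq_coe, MonoidHom.coe_coe, IsUnit.unit_spec]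
      exact hMφ.symm
    rw [← h1, ← Matrix.coe_units_zpow, ← map_zpow, Units.coe_map]
    simp only [RingHom.toMonoidHom_eq_coe, MonoidHom.coe_coe, hφ, RingHom.mapMatrix_apply]
    rfl
  -- generators of the LHS span at n = 1, 2, 3
  set P := Submodule.span ℚ {z : ℂ | ∃ n : ℤ, z = (T⁻¹ * M₀ ^ n * T) 0 1} with hP
  have hMem : ∀ n : ℤ, (T⁻¹ * M₀ ^ n * T) 0 1 ∈ P :=
    fun n => Submodule.subset_span ⟨n, rfl⟩
  have e10 : M₀ 1 0 = 1 := by subst hM₀; simp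
  have e20 : M₀ 2 0 = 0 := by subst hM₀; simp
  have e30 : M₀ 3 0 = 0 := by subst hM₀; simp [Matrix.vecHead, Matrix.vecTail, Function.comp]
  have hM2 : ∀ i, (M₀ * M₀) i 0 = ![(1:ℂ), 2, (d:ℂ), 0] i := by
    intro i
    subst hM₀
    fin_cases i <;> simp [mul_apply, Fin.sum_univ_four, Matrix.vecHead, Matrix.vecTail, Function.comp] <;> norm_num
  have hM3 : ∀ i, (M₀ * M₀ * M₀) i 0 = ![(1:ℂ), 3, 3*(d:ℂ), (d:ℂ)] i := by
    intro i
    have h2 : ∀ j, (M₀ * M₀) 0 j = ![(1:ℂ),0,0,0] j := by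
      intro j; subst hM₀; fin_cases j <;> simp [mul_apply, Fin.sum_univ_four, Matrix.vecHead, Matrix.vecTail, Function.comp] <;> norm_num
    subst hM₀
    fin_cases i <;> simp [mul_apply, Fin.sum_univ_four, Matrix.vecHead, Matrix.vecTail, Function.comp] <;> ring_nf <;> norm_num
  have hz1 : (T⁻¹ * M₀ ^ (1:ℤ) * T) 0 1 = B * u1 := by
    rw [zpow_one, key, e10, e20, e30]; ring
  have hz2 : (T⁻¹ * M₀ ^ (2:ℤ) * T) 0 1 = B * (2 * u1 + (d:ℂ) * u2) := by
    have : M₀ ^ (2:ℤ) = M₀ * M₀ := by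
      rw [show (2:ℤ) = ((2:ℕ):ℤ) by norm_num, zpow_natCast, pow_two]
    rw [this, key, hM2 1, hM2 2, hM2 3]
    show B * (u1 * 2 + u2 * (d:ℂ) + u3 * 0) = _
    ring
  have hz3 : (T⁻¹ * M₀ ^ (3:ℤ) * T) 0 1 = B * (3 * u1 + 3*(d:ℂ) * u2 + (d:ℂ) * u3) := by
    have : M₀ ^ (3:ℤ) = M₀ * M₀ * M₀ := by
      rw [show (3:ℤ) = ((3:ℕ):ℤ) by norm_num, zpow_natCast, pow_succ, pow_two]
    rw [this, key, hM3 1, hM3 2, hM3 3]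
    show B * (u1 * 3 + u2 * (3*(d:ℂ)) + u3 * (d:ℂ)) = _
    ring
  have hdc : (d : ℂ) ≠ 0 := by exact_mod_cast hd
  have g1 : B * u1 ∈ P := hz1 ▸ hMem 1
  have hinv : ∀ x : ℂ, (d⁻¹ : ℚ) • ((d : ℂ) * x) = x := by
    intro x
    rw [Rat.smul_def]
    push_cast
    rw [← mul_assoc, inv_mul_cancel₀ hdc, one_mul]
  have g2' : (d : ℂ) * (B * u2) ∈ P := by
    have h : (d : ℂ) * (B * u2) = B * (2 * u1 + (d:ℂ) * u2) - (2 : ℚ) • (B * u1) := by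
      rw [Rat.smul_def]; push_cast; ring
    rw [h]
    exact P.sub_mem (hz2 ▸ hMem 2) (P.smul_mem _ g1)
  have g3' : (d : ℂ) * (B * u3) ∈ P := by
    have h : (d : ℂ) * (B * u3) = B * (3 * u1 + 3*(d:ℂ) * u2 + (d:ℂ) * u3)
        - (3 : ℚ) • (B * (2 * u1 + (d:ℂ) * u2)) + (3 : ℚ) • (B * u1) := by
      simp only [Rat.smul_def]; push_cast; ring
    rw [h]
    exact P.add_mem (P.sub_mem (hz3 ▸ hMem 3) (P.smul_mem _ (hz2 ▸ hMem 2))) (P.smul_mem _ g1)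
  have g2 : B * u2 ∈ P := hinv (B * u2) ▸ P.smul_mem (d⁻¹ : ℚ) g2'
  have g3 : B * u3 ∈ P := hinv (B * u3) ▸ P.smul_mem (d⁻¹ : ℚ) g3'
  apply le_antisymm
  · rw [Submodule.span_le]
    rintro z ⟨n, rfl⟩
    obtain ⟨Q, hQ⟩ := hpow n
    exact Submodule.subset_span ⟨Q, by rw [hQ]⟩
  · rw [Submodule.span_le]
    rintro z ⟨Q, rfl⟩
    have hz : (T⁻¹ * Q.map (fun q => (q : ℂ)) * T) 0 1
        = (Q 1 0 : ℚ) • (B * u1) + (Q 2 0 : ℚ) • (B * u2) + (Q 3 0 : ℚ) • (B * u3) := by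
      rw [key]
      simp only [Rat.smul_def, Matrix.map_apply]
      ring
    rw [hz]
    exact P.add_mem (P.add_mem (P.smul_mem _ g1) (P.smul_mem _ g2)) (P.smul_mem _ g3)
end
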